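/- Let H be a real inner product space, ν > 0, Δt > 0, θ ∈ [1/2, 1], and 0 < ε < ν. Let A : H →ₗ[ℝ] H satisfy ⟪A v, v⟫ ≥ 0 for all v, let B : H → H satisfy ⟪B v, v⟫ = 0 for all v, and let C : H → H satisfy ⟪C v, v⟫ ≥ 0 for all v. Suppose u, u⁺ ∈ H satisfy (1/Δt)·(u⁺ − u) + ν·A uθ + B uθ + C uθ = f with uθ := θ·u⁺ + (1−θ)·u and f ∈ H, and suppose there exists F ≥ 0 such that ⟪f, uθ⟫ ≤ F·√(⟪A uθ, uθ⟫) (dual-norm bound on the forcing). Then (1/2)‖u⁺‖² − (1/2)‖u‖² + (ν − ε)·Δt·⟪A uθ, uθ⟫ ≤ Δt·F²/(4ε). (ROM energy stability after Young's inequality.) -/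

import Mathlib

/-!
Pairing the scheme with `uθ` kills `B`, drops the nonnegative `C`-term, and for `θ ≥ 1/2` the
discrete time derivative `⟪u⁺ - u, uθ⟫` dominates `½‖u⁺‖² - ½‖u‖²` (the surplus is
`(θ - ½)‖u⁺ - u‖²`, numerical dissipation). The forcing term `F √⟪A uθ, uθ⟫` is split by Young's
inequality into `ε ⟪A uθ, uθ⟫`, absorbed by the viscous term, and `F² / (4ε)`.
-/

open RealInnerProductSpace

theorem mul_le_mul_sq_add_sq_div_four_mul {ε : ℝ} (hε : 0 < ε) (b c : ℝ) :
    b * c ≤ ε * c ^ 2 + b ^ 2 / (4 * ε) := by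
  have h : 0 ≤ (2 * ε * c - b) ^ 2 / (4 * ε) := by positivity
  have h' : (2 * ε * c - b) ^ 2 / (4 * ε) = ε * c ^ 2 - b * c + b ^ 2 / (4 * ε) := by
    field_simp
    ring
  linarith

section InnerProduct

variable {H : Type*} [NormedAddCommGroup H] [InnerProductSpace ℝ H]

theorem inner_sub_theta_combination (θ : ℝ) (x y : H) :
    ⟪x - y, θ • x + (1 - θ) • y⟫ =
      (1 / 2) * ‖x‖ ^ 2 - (1 / 2) * ‖y‖ ^ 2 + (θ - 1 / 2) * ‖x - y‖ ^ 2 := by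
  rw [norm_sub_sq_real, inner_add_right, real_inner_smul_right, real_inner_smul_right,
    inner_sub_left, inner_sub_left, real_inner_self_eq_norm_sq, real_inner_self_eq_norm_sq,
    real_inner_comm y x]
  ring

theorem half_sq_sub_half_sq_le_inner_sub_theta {θ : ℝ} (hθ : 1 / 2 ≤ θ) (x y : H) :
    (1 / 2) * ‖x‖ ^ 2 - (1 / 2) * ‖y‖ ^ 2 ≤ ⟪x - y, θ • x + (1 - θ) • y⟫ := by
  rw [inner_sub_theta_combination]
  linarith [mul_nonneg (sub_nonneg.2 hθ) (sq_nonneg ‖x - y‖)]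

theorem inner_add_smul_le_of_eq {A B C : H → H} (hB : ∀ v, ⟪B v, v⟫ = 0)
    (hC : ∀ v, 0 ≤ ⟪C v, v⟫) {ν : ℝ} {d w f : H} (h : d + ν • A w + B w + C w = f) :
    ⟪d, w⟫ + ν * ⟪A w, w⟫ ≤ ⟪f, w⟫ := by
  rw [← h, inner_add_left, inner_add_left, inner_add_left, real_inner_smul_left, hB w]
  linarith [hC w]

end InnerProduct

theorem rom_energy_stability_young_general {H : Type*} [NormedAddCommGroup H]
    [InnerProductSpace ℝ H]
    (ν Δt θ ε : ℝ) (hΔt : 0 < Δt) (hθ₁ : 1 / 2 ≤ θ)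
    (hε : 0 < ε)
    (A : H →ₗ[ℝ] H) (B C : H → H)
    (hA : ∀ v : H, 0 ≤ ⟪A v, v⟫)
    (hB : ∀ v : H, ⟪B v, v⟫ = 0)
    (hC : ∀ v : H, 0 ≤ ⟪C v, v⟫)
    (u uplus f uθ : H)
    (huθ : uθ = θ • uplus + (1 - θ) • u)
    (hstep : (1 / Δt) • (uplus - u) + ν • A uθ + B uθ + C uθ = f)
    (F : ℝ)
    (hforce : ⟪f, uθ⟫ ≤ F * Real.sqrt ⟪A uθ, uθ⟫) :
    (1 / 2) * ‖uplus‖ ^ 2 - (1 / 2) * ‖u‖ ^ 2 + (ν - ε) * Δt * ⟪A uθ, uθ⟫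
      ≤ Δt * F ^ 2 / (4 * ε) := by
  have henergy := half_sq_sub_half_sq_le_inner_sub_theta hθ₁ uplus u
  rw [← huθ] at henergy
  have hpair := inner_add_smul_le_of_eq hB hC hstep
  rw [real_inner_smul_left] at hpair
  have hyoung := mul_le_mul_sq_add_sq_div_four_mul hε F (Real.sqrt ⟪A uθ, uθ⟫)
  rw [Real.sq_sqrt (hA uθ)] at hyoung
  have hscaled := mul_le_mul_of_nonneg_left ((hpair.trans hforce).trans hyoung) hΔt.le
  have hcancel : Δt * (1 / Δt * ⟪uplus - u, uθ⟫) = ⟪uplus - u, uθ⟫ := by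
    field_simp
  rw [mul_add, hcancel] at hscaled
  rw [mul_div_assoc]
  linarith

/-- ROM energy stability after Young's inequality: with a dual-norm bound on the
forcing, the certified θ-scheme step satisfies the discrete energy inequality with
reduced viscosity coefficient `ν - ε`. -/
theorem rom_energy_stability_young {H : Type*} [NormedAddCommGroup H]
    [InnerProductSpace ℝ H]
    (ν Δt θ ε : ℝ) (hν : 0 < ν) (hΔt : 0 < Δt) (hθ₁ : 1 / 2 ≤ θ) (hθ₂ : θ ≤ 1)
    (hε : 0 < ε) (hεν : ε < ν)
    (A : H →ₗ[ℝ] H) (B C : H → H)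
    (hA : ∀ v : H, 0 ≤ ⟪A v, v⟫)
    (hB : ∀ v : H, ⟪B v, v⟫ = 0)
    (hC : ∀ v : H, 0 ≤ ⟪C v, v⟫)
    (u uplus f uθ : H)
    (huθ : uθ = θ • uplus + (1 - θ) • u)
    (hstep : (1 / Δt) • (uplus - u) + ν • A uθ + B uθ + C uθ = f)
    (F : ℝ) (hF : 0 ≤ F)
    (hforce : ⟪f, uθ⟫ ≤ F * Real.sqrt ⟪A uθ, uθ⟫) :
    (1 / 2) * ‖uplus‖ ^ 2 - (1 / 2) * ‖u‖ ^ 2 + (ν - ε) * Δt * ⟪A uθ, uθ⟫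
      ≤ Δt * F ^ 2 / (4 * ε) :=
  rom_energy_stability_young_general ν Δt θ ε hΔt hθ₁ hε A B C hA hB hC u uplus f uθ huθ hstep F
    hforce
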